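/- arXiv:2602.23591 — 2 statements merged into one kernel-verified Lean document; each statement's English description precedes it below -/
import Mathlib

section
/- There exists a constant C > 0, independent of n, m, A, B, such that for all natural numbers n, m and all nonnegative reals A, B and all s ≥ 1: (A + (n+m)^s·B)^(n+m) ≤ C^(n+m)·(A + n^s·B)^n·(A + m^s·B)^m. -/
/-!
Assume `m ≤ n`. Then `(n + m)^s ≤ 2^s n^s`, which bounds `A + (n+m)^s B` by `2^s (A + n^s B)`.
It remains to trade the `m` surplus factors `A + n^s B` for `A + m^s B`: since `n^s = (n/m)^s m^s`
each costs a factor `(n/m)^s`, and `(n/m)^m ≤ e^n` because `t ≤ e^t`. So `C = 2^s e^s` works.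
-/

open Real

lemma add_mul_le_mul_add_mul {A B x y c : ℝ} (hA : 0 ≤ A) (hB : 0 ≤ B) (hc : 1 ≤ c)
    (hxy : x ≤ c * y) : A + x * B ≤ c * (A + y * B) := by
  nlinarith

lemma div_natCast_pow_le_exp {x : ℝ} (hx : 0 ≤ x) (m : ℕ) : (x / m) ^ m ≤ exp x := by
  rcases m.eq_zero_or_pos with rfl | hm
  · simpa using one_le_exp hx
  calc (x / m) ^ m ≤ exp (x / m) ^ m :=
        pow_le_pow_left₀ (by positivity) ((le_add_of_nonneg_right zero_le_one).trans
          (add_one_le_exp _)) m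
    _ = exp x := by rw [← exp_nat_mul, mul_div_cancel₀ _ (by positivity)]

lemma natCast_add_rpow_le {s : ℝ} (hs : 0 ≤ s) {m n : ℕ} (hmn : m ≤ n) :
    ((n + m : ℕ) : ℝ) ^ s ≤ 2 ^ s * (n : ℝ) ^ s := by
  rw [← mul_rpow zero_le_two n.cast_nonneg]
  refine rpow_le_rpow (by positivity) ?_ hs
  push_cast
  linarith [(Nat.cast_le (α := ℝ)).2 hmn]

section

variable {s A B : ℝ} (hs : 0 ≤ s) (hA : 0 ≤ A) (hB : 0 ≤ B)
include hs hA hB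

lemma add_natCast_rpow_mul_pow_le {m n : ℕ} (hmn : m ≤ n) :
    (A + (n : ℝ) ^ s * B) ^ m ≤ exp s ^ n * (A + (m : ℝ) ^ s * B) ^ m := by
  rcases m.eq_zero_or_pos with rfl | hm
  · simpa using one_le_pow₀ (one_le_exp hs)
  have hm' : (0 : ℝ) < m := by exact_mod_cast hm
  set c := ((n : ℝ) / m) ^ s
  have hc : 1 ≤ c := one_le_rpow ((one_le_div hm').2 (by exact_mod_cast hmn)) hs
  have hn : (n : ℝ) ^ s = c * (m : ℝ) ^ s := by
    rw [← mul_rpow (by positivity) hm'.le, div_mul_cancel₀ _ hm'.ne']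
  have hcm : c ^ m ≤ exp s ^ n :=
    calc c ^ m = (((n : ℝ) / m) ^ m) ^ s := rpow_pow_comm (by positivity) s m
      _ ≤ exp n ^ s := rpow_le_rpow (by positivity) (div_natCast_pow_le_exp n.cast_nonneg m) hs
      _ = exp s ^ n := by rw [← exp_mul, ← exp_nat_mul, mul_comm]
  calc (A + (n : ℝ) ^ s * B) ^ m ≤ (c * (A + (m : ℝ) ^ s * B)) ^ m :=
        pow_le_pow_left₀ (by positivity) (add_mul_le_mul_add_mul hA hB hc hn.le) m
    _ = c ^ m * (A + (m : ℝ) ^ s * B) ^ m := mul_pow _ _ _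
    _ ≤ exp s ^ n * (A + (m : ℝ) ^ s * B) ^ m := by gcongr

lemma add_natCast_add_rpow_mul_pow_le {m n : ℕ} (hmn : m ≤ n) :
    (A + ((n + m : ℕ) : ℝ) ^ s * B) ^ (n + m) ≤
      (2 ^ s * exp s) ^ (n + m) * (A + (n : ℝ) ^ s * B) ^ n * (A + (m : ℝ) ^ s * B) ^ m :=
  calc (A + ((n + m : ℕ) : ℝ) ^ s * B) ^ (n + m)
      ≤ (2 ^ s * (A + (n : ℝ) ^ s * B)) ^ (n + m) :=
        pow_le_pow_left₀ (by positivity) (add_mul_le_mul_add_mul hA hB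
          (one_le_rpow one_le_two hs) (natCast_add_rpow_le hs hmn)) _
    _ = (2 ^ s) ^ (n + m) * (A + (n : ℝ) ^ s * B) ^ n * (A + (n : ℝ) ^ s * B) ^ m := by
        rw [mul_pow, pow_add _ n m]; ring
    _ ≤ (2 ^ s) ^ (n + m) * (A + (n : ℝ) ^ s * B) ^ n *
          (exp s ^ (n + m) * (A + (m : ℝ) ^ s * B) ^ m) := by
        gcongr
        exact (add_natCast_rpow_mul_pow_le hs hA hB hmn).trans
          (by gcongr; exacts [one_le_exp hs, n.le_add_right m])
    _ = (2 ^ s * exp s) ^ (n + m) * (A + (n : ℝ) ^ s * B) ^ n * (A + (m : ℝ) ^ s * B) ^ m := by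
        rw [mul_pow]; ring

end

/-- For each fixed `s ≥ 1` there is a constant `C > 0`, independent of `n, m, A, B`,
such that `(A + (n+m)^s·B)^(n+m) ≤ C^(n+m)·(A + n^s·B)^n·(A + m^s·B)^m`. -/
theorem stmt_0 (s : ℝ) (hs : 1 ≤ s) :
    ∃ C : ℝ, 0 < C ∧ ∀ (n m : ℕ) (A B : ℝ), 0 ≤ A → 0 ≤ B →
      (A + ((n + m : ℕ) : ℝ) ^ s * B) ^ (n + m) ≤
        C ^ (n + m) * (A + (n : ℝ) ^ s * B) ^ n * (A + (m : ℝ) ^ s * B) ^ m := by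
  have hs₀ : 0 ≤ s := zero_le_one.trans hs
  refine ⟨2 ^ s * exp s, by positivity, fun n m A B hA hB => ?_⟩
  rcases le_total m n with hmn | hnm
  · exact add_natCast_add_rpow_mul_pow_le hs₀ hA hB hmn
  · rw [add_comm n m, mul_right_comm]
    exact add_natCast_add_rpow_mul_pow_le hs₀ hA hB hnm
end

section
/- Let μ : ℝ²ⁿ → ℂ be a smooth symbol with an associated two-sided inverse construction: suppose (1−μ)#(1+k) = (1+k)#(1−μ) = 1 in a symbol algebra, where # is an associative bilinear product, and suppose for a family of multiplicative weights (w_α)_{α ∈ ℕ^{2n}} with w_α·w_β ≲ w_{α+β} one has ∂_X^α μ ∈ S(w_α) for |α| ≤ N, where S(w) are classes closed under # with S(w₁)#S(w₂) ⊆ S(w₁w₂) and under differentiation via Leibniz: ∂_X^β(a#b) = ∑ C (∂^{β'}a)#(∂^{β''}b). Then ∂_X^α k ∈ S(w_α) for all |α| ≤ N. -/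
/-!
Applying `D^α` to `k = μ + μ k` and expanding `D^α (μ k)` by the Leibniz rule isolates the term
`μ · D^α k`, so `(1 - μ) D^α k = D^α μ + ∑ D^{α'} μ · D^{α''} k`, where `α'` is nonempty and hence
`|α''| < |α|`. By induction on `|α|` every summand lies in `S α`, and multiplying by
`1 + k = (1 - μ)⁻¹` on the left keeps it there.
-/

/-- Iterated application of the derivations `D` along the multi-index
(list of directions) `L`. -/
def Dpow {R : Type*} [Ring R] {d : ℕ} (D : Fin d → R → R) : List (Fin d) → R → R
  | [], r => r
  | i :: L, r => D i (Dpow D L r)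

/-- The order-preserving splittings `(L₁, L₂)` of `L` with `L₁ ≠ []`, listed with multiplicity:
they index the Leibniz terms of `D^L (a * b)` in which `a` is differentiated. -/
def properSplits {d : ℕ} : List (Fin d) → List (List (Fin d) × List (Fin d))
  | [] => []
  | i :: L => ([i], L) ::
      ((properSplits L).map (fun p => (i :: p.1, p.2)) ++
        (properSplits L).map (fun p => (p.1, i :: p.2)))

lemma fst_ne_nil_and_perm_of_mem_properSplits {d : ℕ} {L : List (Fin d)}
    {p : List (Fin d) × List (Fin d)} (hp : p ∈ properSplits L) :
    p.1 ≠ [] ∧ (p.1 ++ p.2).Perm L := by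
  induction L generalizing p with
  | nil => simp [properSplits] at hp
  | cons i L ih =>
    simp only [properSplits, List.mem_cons, List.mem_append, List.mem_map] at hp
    rcases hp with rfl | ⟨q, hq, rfl⟩ | ⟨q, hq, rfl⟩
    · simp
    · exact ⟨List.cons_ne_nil _ _, (ih hq).2.cons i⟩
    · exact ⟨(ih hq).1, List.perm_middle.trans ((ih hq).2.cons i)⟩

section Leibniz

variable {R : Type*} [Ring R] {d : ℕ} (D : Fin d → R → R)

lemma Dpow_add (hadd : ∀ i (a b : R), D i (a + b) = D i a + D i b)
    (L : List (Fin d)) (a b : R) : Dpow D L (a + b) = Dpow D L a + Dpow D L b := by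
  induction L with
  | nil => rfl
  | cons i L ih => simp only [Dpow, ih, hadd]

lemma Dpow_mul (hadd : ∀ i (a b : R), D i (a + b) = D i a + D i b)
    (hder : ∀ i (a b : R), D i (a * b) = D i a * b + a * D i b) (a b : R) (L : List (Fin d)) :
    Dpow D L (a * b) = a * Dpow D L b
      + ((properSplits L).map fun p => Dpow D p.1 a * Dpow D p.2 b).sum := by
  induction L with
  | nil => simp [Dpow, properSplits]
  | cons i L ih =>
    have hsum : ∀ l : List R, D i l.sum = (l.map (D i)).sum :=
      map_list_sum (AddMonoidHom.mk' (D i) (hadd i))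
    simp only [Dpow, ih, hadd, hder, hsum, properSplits, List.map_map, Function.comp_def,
      List.map_cons, List.map_append, List.sum_cons, List.sum_append, List.sum_map_add]
    abel

end Leibniz

lemma one_sub_mul_Dpow {R : Type*} [Ring R] {d : ℕ} (D : Fin d → R → R)
    (hadd : ∀ i (a b : R), D i (a + b) = D i a + D i b)
    (hder : ∀ i (a b : R), D i (a * b) = D i a * b + a * D i b)
    {μ k : R} (hk : k = μ + μ * k) (L : List (Fin d)) :
    (1 - μ) * Dpow D L k = Dpow D L μ
      + ((properSplits L).map fun p => Dpow D p.1 μ * Dpow D p.2 k).sum := by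
  have h := congrArg (Dpow D L) hk
  rw [Dpow_add D hadd, Dpow_mul D hadd hder] at h
  rw [sub_mul, one_mul]
  nth_rewrite 1 [h]
  abel

/-- Abstract form of the inverse-symbol lemma: in a (noncommutative) ring with
derivations `D i`, if `(1−μ)(1+k) = (1+k)(1−μ) = 1`, the classes `S α` (indexed by
multi-indices, invariant under permutation of the index) satisfy
`S α · S β ⊆ S (α + β)`, multiplication by `1 + k` preserves each `S α`, and
`D^α μ ∈ S α` for `|α| ≤ N`, then `D^α k ∈ S α` for `|α| ≤ N`. -/
theorem stmt_8 {R : Type*} [Ring R] {d : ℕ} (D : Fin d → R → R)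
    (hadd : ∀ i (a b : R), D i (a + b) = D i a + D i b)
    (hder : ∀ i (a b : R), D i (a * b) = D i a * b + a * D i b)
    (S : List (Fin d) → AddSubgroup R)
    (hperm : ∀ L₁ L₂ : List (Fin d), L₁.Perm L₂ → S L₁ = S L₂)
    (hmul : ∀ (L₁ L₂ : List (Fin d)) (a b : R), a ∈ S L₁ → b ∈ S L₂ →
      a * b ∈ S (L₁ ++ L₂))
    (μ k : R) (hinv₁ : (1 - μ) * (1 + k) = 1) (hinv₂ : (1 + k) * (1 - μ) = 1)
    (hk : ∀ (L : List (Fin d)) (a : R), a ∈ S L → (1 + k) * a ∈ S L ∧ a * (1 + k) ∈ S L)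
    (N : ℕ) (hμ : ∀ L : List (Fin d), L.length ≤ N → Dpow D L μ ∈ S L) :
    ∀ L : List (Fin d), L.length ≤ N → Dpow D L k ∈ S L := by
  have hk_eq : k = μ + μ * k := by
    rw [← sub_eq_zero]
    calc k - (μ + μ * k) = (1 - μ) * (1 + k) - 1 := by noncomm_ring
      _ = 0 := by rw [hinv₁, sub_self]
  intro L
  induction hn : L.length using Nat.strong_induction_on generalizing L with
  | _ n ih =>
    intro hLN
    have hterm : ∀ p ∈ properSplits L, Dpow D p.1 μ * Dpow D p.2 k ∈ S L := by
      intro p hp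
      obtain ⟨hne, hp⟩ := fst_ne_nil_and_perm_of_mem_properSplits hp
      have hlen : p.1.length + p.2.length = n := by simpa [hn] using hp.length_eq
      have hpos : 0 < p.1.length := List.length_pos_iff.mpr hne
      rw [← hperm _ _ hp]
      exact hmul _ _ _ _ (hμ _ (by omega)) (ih _ (by omega) _ rfl (by omega))
    have hsum : (1 - μ) * Dpow D L k ∈ S L := by
      rw [one_sub_mul_Dpow D hadd hder hk_eq]
      exact add_mem (hμ L (hn ▸ hLN))
        (AddSubgroup.list_sum_mem _ (List.forall_mem_map.mpr hterm))
    rw [← one_mul (Dpow D L k), ← hinv₂, mul_assoc]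
    exact (hk L _ hsum).1
end
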